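/- With the notation of the misspecified allocation problem, suppose |log Ã_q − log A_q| ≤ ε for all q = 1,…,Q. Then the efficiency ratio satisfies 1 ≤ J(A, ñ*)/J*(A) ≤ e^ε, where ñ* is the allocation optimal for Ã and J*(A) the optimum under the true A. -/
import Mathlib


open Finset

/-- Robustness to misspecified rectification difficulty: if `|log Ã_q - log A_q| ≤ ε`
for all `q`, the efficiency ratio lies in `[1, e^ε]`. -/
theorem allocation_robustness (Q : ℕ) (hQ : 0 < Q)
    (w A At c : Fin Q → ℝ) (B ε : ℝ)
    (hw : ∀ q, 0 < w q) (hA : ∀ q, 0 < A q) (hAt : ∀ q, 0 < At q)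
    (hc : ∀ q, 0 < c q) (hB : 0 < B)
    (hε : ∀ q, |Real.log (At q) - Real.log (A q)| ≤ ε) :
    let nt : Fin Q → ℝ :=
      fun q => B / (∑ j, Real.sqrt (w j * At j * c j)) * Real.sqrt (w q * At q / c q)
    let J : ℝ := ∑ q, w q * A q / nt q
    let Jstar : ℝ := (1 / B) * (∑ q, Real.sqrt (w q * A q * c q)) ^ 2
    1 ≤ J / Jstar ∧ J / Jstar ≤ Real.exp ε := by
  intro nt J Jstar
  haveI : Nonempty (Fin Q) := ⟨⟨0, hQ⟩⟩
  have hwAc : ∀ q, 0 < w q * A q * c q := fun q => mul_pos (mul_pos (hw q) (hA q)) (hc q)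
  have hwAtc : ∀ q, 0 < w q * At q * c q := fun q => mul_pos (mul_pos (hw q) (hAt q)) (hc q)
  have hwAtdc : ∀ q, 0 < w q * At q / c q := fun q => div_pos (mul_pos (hw q) (hAt q)) (hc q)
  have hcdwAt : ∀ q, 0 < c q / (w q * At q) := fun q => div_pos (hc q) (mul_pos (hw q) (hAt q))
  set S : ℝ := ∑ q, Real.sqrt (w q * A q * c q) with hS
  set T : ℝ := ∑ j, Real.sqrt (w j * At j * c j) with hT
  set u : Fin Q → ℝ := fun q => w q * A q * Real.sqrt (c q / (w q * At q)) with hu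
  set U : ℝ := ∑ q, u q with hU
  have hupos : ∀ q, 0 < u q := fun q =>
    mul_pos (mul_pos (hw q) (hA q)) (Real.sqrt_pos.2 (hcdwAt q))
  have hSpos : 0 < S := Finset.sum_pos (fun q _ => Real.sqrt_pos.2 (hwAc q))
    Finset.univ_nonempty
  have hTpos : 0 < T := Finset.sum_pos (fun q _ => Real.sqrt_pos.2 (hwAtc q))
    Finset.univ_nonempty
  have hUpos : 0 < U := Finset.sum_pos (fun q _ => hupos q) Finset.univ_nonempty
  -- J = (T / B) * U
  have hJ : J = T / B * U := by
    show (∑ q, w q * A q / nt q) = T / B * U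
    rw [hU, Finset.mul_sum]
    refine Finset.sum_congr rfl fun q _ => ?_
    have hs : 0 < Real.sqrt (w q * At q / c q) := Real.sqrt_pos.2 (hwAtdc q)
    have hst : Real.sqrt (w q * At q / c q) * Real.sqrt (c q / (w q * At q)) = 1 := by
      rw [← Real.sqrt_mul (hwAtdc q).le]
      rw [show w q * At q / c q * (c q / (w q * At q)) = 1 by
        field_simp [(hw q).ne', (hAt q).ne', (hc q).ne']]
      exact Real.sqrt_one
    show w q * A q / (B / T * Real.sqrt (w q * At q / c q)) =
      T / B * (w q * A q * Real.sqrt (c q / (w q * At q)))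
    have ht : Real.sqrt (c q / (w q * At q)) = (Real.sqrt (w q * At q / c q))⁻¹ :=
      eq_inv_of_mul_eq_one_right hst
    rw [ht]
    field_simp
  -- Cauchy–Schwarz : S ^ 2 ≤ T * U
  have hCS : S ^ 2 ≤ T * U := by
    have h := Finset.sum_mul_sq_le_sq_mul_sq Finset.univ
      (fun q => Real.sqrt (Real.sqrt (w q * At q * c q)))
      (fun q => Real.sqrt (u q))
    have h1 : ∀ q : Fin Q, Real.sqrt (Real.sqrt (w q * At q * c q)) * Real.sqrt (u q)
        = Real.sqrt (w q * A q * c q) := by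
      intro q
      rw [← Real.sqrt_mul (Real.sqrt_nonneg _)]
      congr 1
      show Real.sqrt (w q * At q * c q) * (w q * A q * Real.sqrt (c q / (w q * At q)))
        = w q * A q * c q
      rw [show Real.sqrt (w q * At q * c q) * (w q * A q * Real.sqrt (c q / (w q * At q)))
          = w q * A q * (Real.sqrt (w q * At q * c q) * Real.sqrt (c q / (w q * At q))) by ring,
        ← Real.sqrt_mul (hwAtc q).le]
      rw [show w q * At q * c q * (c q / (w q * At q)) = c q ^ 2 by
        field_simp [(hw q).ne', (hAt q).ne']]
      rw [Real.sqrt_sq (hc q).le]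
    have h2 : ∀ q : Fin Q, Real.sqrt (Real.sqrt (w q * At q * c q)) ^ 2
        = Real.sqrt (w q * At q * c q) := fun q => Real.sq_sqrt (Real.sqrt_nonneg _)
    have h3 : ∀ q : Fin Q, Real.sqrt (u q) ^ 2 = u q := fun q => Real.sq_sqrt (hupos q).le
    simp only [h1, h2, h3] at h
    exact h
  -- bounds from ε
  have hεnn : 0 ≤ ε := le_trans (abs_nonneg _) (hε ⟨0, hQ⟩)
  have hAt_le : ∀ q, At q ≤ Real.exp ε * A q := by
    intro q
    have h := (abs_le.1 (hε q)).2
    have := Real.exp_le_exp.2 (by linarith : Real.log (At q) ≤ ε + Real.log (A q))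
    rwa [Real.exp_log (hAt q), Real.exp_add, Real.exp_log (hA q)] at this
  have hA_le : ∀ q, A q ≤ Real.exp ε * At q := by
    intro q
    have h := (abs_le.1 (hε q)).1
    have := Real.exp_le_exp.2 (by linarith : Real.log (A q) ≤ ε + Real.log (At q))
    rwa [Real.exp_log (hA q), Real.exp_add, Real.exp_log (hAt q)] at this
  have hexp2 : Real.exp (ε / 2) = Real.sqrt (Real.exp ε) := Real.exp_half ε
  have hT_le : T ≤ Real.exp (ε / 2) * S := by
    rw [hT, hS, Finset.mul_sum]
    refine Finset.sum_le_sum fun q _ => ?_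
    rw [hexp2, ← Real.sqrt_mul (Real.exp_nonneg _)]
    refine Real.sqrt_le_sqrt ?_
    have h := mul_le_mul_of_nonneg_left (hAt_le q) (mul_pos (hw q) (hc q)).le
    nlinarith [h]
  have hU_le : U ≤ Real.exp (ε / 2) * S := by
    rw [hU, hS, Finset.mul_sum]
    refine Finset.sum_le_sum fun q _ => ?_
    show w q * A q * Real.sqrt (c q / (w q * At q)) ≤ Real.exp (ε / 2) * Real.sqrt (w q * A q * c q)
    have key : w q * A q * Real.sqrt (c q / (w q * At q))
        = Real.sqrt ((w q * A q) ^ 2 * (c q / (w q * At q))) := by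
      rw [Real.sqrt_mul (sq_nonneg _), Real.sqrt_sq (mul_pos (hw q) (hA q)).le]
    rw [key, hexp2, ← Real.sqrt_mul (Real.exp_nonneg _)]
    refine Real.sqrt_le_sqrt ?_
    have hdiv : A q / At q ≤ Real.exp ε := by
      rw [div_le_iff₀ (hAt q)]
      linarith [hA_le q]
    calc (w q * A q) ^ 2 * (c q / (w q * At q))
        = (w q * A q * c q) * (A q / At q) := by
          field_simp [(hw q).ne', (hAt q).ne']
      _ ≤ (w q * A q * c q) * Real.exp ε :=
          mul_le_mul_of_nonneg_left hdiv (hwAc q).le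
      _ = Real.exp ε * (w q * A q * c q) := mul_comm _ _
  -- ratio
  have hJstar : Jstar = S ^ 2 / B := by
    show (1 / B) * S ^ 2 = S ^ 2 / B
    ring
  have hratio : J / Jstar = T * U / S ^ 2 := by
    rw [hJ, hJstar]
    field_simp
    try ring
  constructor
  · rw [hratio, le_div_iff₀ (by positivity)]
    linarith
  · rw [hratio, div_le_iff₀ (by positivity)]
    calc T * U ≤ (Real.exp (ε / 2) * S) * (Real.exp (ε / 2) * S) :=
          mul_le_mul hT_le hU_le hUpos.le (by positivity)
      _ = (Real.exp (ε / 2) * Real.exp (ε / 2)) * S ^ 2 := by ring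
      _ = Real.exp ε * S ^ 2 := by
          rw [← Real.exp_add]; norm_num
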